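/- Let D be a noisy data set with y_i = f*(x_i) + ε_i, ε_i independent, E[ε_i] = 0, |ε_i| ≤ M, with quadrature weights 0 ≤ w_{i,s,D} ≤ c₂|D|^{−1}. Then the variance term of the filtered hyperinterpolation satisfies ∫_{S^d} E{(f⋄*_{D,n}(x) − f⋄_{D,n}(x))²} dω(x) ≤ c₁ c₂² M² n^d / |D|, where f⋄*_{D,n}(x) = Σ_i w_{i,s,D} f*(x_i) K_n(x_i·x) is the noise-free estimator and c₁ is the constant in the bound ‖K_n(x · ·)‖²_{L2(S^d)} ≤ c₁ n^d. -/

import Mathlib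

open MeasureTheory ProbabilityTheory Real Filter
open scoped BigOperators ENNReal RealInnerProductSpace

noncomputable section

/-- The unit sphere `S^d ⊂ ℝ^{d+1}`. -/
abbrev UnitSphere (d : ℕ) : Type := Metric.sphere (0 : EuclideanSpace ℝ (Fin (d + 1))) 1

/-- Euclidean inner product of two points on the sphere. -/
def sdot {d : ℕ} (x y : UnitSphere d) : ℝ :=
  ⟪(x : EuclideanSpace ℝ (Fin (d + 1))), (y : EuclideanSpace ℝ (Fin (d + 1)))⟫

/-- Geodesic distance on the sphere. -/
def geoDist {d : ℕ} (x y : UnitSphere d) : ℝ := Real.arccos (sdot x y)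

/-- Surface (Lebesgue) measure on `S^d`: the `d`-dimensional Hausdorff measure. -/
def sphereMeasure (d : ℕ) : Measure (UnitSphere d) := μH[d]

/-- Spherical polynomials of degree at most `n`: restrictions to the sphere of
polynomials on `ℝ^{d+1}` of total degree at most `n`. -/
def sphPoly (d n : ℕ) : Set (UnitSphere d → ℝ) :=
  {f | ∃ p : MvPolynomial (Fin (d + 1)) ℝ, p.totalDegree ≤ n ∧
    ∀ x : UnitSphere d, f x = MvPolynomial.eval (fun i => (x : EuclideanSpace ℝ (Fin (d + 1))) i) p}

/-- The space of spherical harmonics of degree `ℓ`: restrictions to the sphere of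
homogeneous harmonic polynomials of degree `ℓ` on `ℝ^{d+1}`. -/
def sphHarmonic (d ℓ : ℕ) : Set (UnitSphere d → ℝ) :=
  {f | ∃ p : MvPolynomial (Fin (d + 1)) ℝ, p.IsHomogeneous ℓ ∧
    (∑ i : Fin (d + 1), MvPolynomial.pderiv i (MvPolynomial.pderiv i p)) = 0 ∧
    ∀ x : UnitSphere d, f x = MvPolynomial.eval (fun i => (x : EuclideanSpace ℝ (Fin (d + 1))) i) p}

/-- A filter of smoothness `κ`: `η ∈ C^κ(ℝ₊)`, `supp η ⊆ [1/2,2]`, and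
`η(t)² + η(2t)² = 1` on `[1/2,1]`. -/
structure IsFilter (η : ℝ → ℝ) (κ : ℕ) : Prop where
  smooth : ContDiffOn ℝ κ η (Set.Ici 0)
  supp : ∀ t : ℝ, 0 ≤ t → t ∉ Set.Icc (1/2 : ℝ) 2 → η t = 0
  partition : ∀ t ∈ Set.Icc (1/2 : ℝ) 1, (η t) ^ 2 + (η (2 * t)) ^ 2 = 1

/-- Gegenbauer polynomials `C_ℓ^λ` via the three-term recurrence. -/
def gegenbauer (lam : ℝ) : ℕ → Polynomial ℝ
  | 0 => 1
  | 1 => Polynomial.C (2 * lam) * Polynomial.X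
  | (n + 2) =>
      Polynomial.C (2 * ((n : ℝ) + 1 + lam) / ((n : ℝ) + 2)) * Polynomial.X *
          gegenbauer lam (n + 1) -
        Polynomial.C (((n : ℝ) + 2 * lam) / ((n : ℝ) + 2)) * gegenbauer lam n

/-- The normalized Gegenbauer polynomial `P_ℓ^{(d+1)}` with `P_ℓ^{(d+1)}(1) = 1`. -/
def normGegenbauer (d ℓ : ℕ) (t : ℝ) : ℝ :=
  (gegenbauer (((d : ℝ) - 1) / 2) ℓ).eval t / (gegenbauer (((d : ℝ) - 1) / 2) ℓ).eval 1

/-- `Z_{d,ℓ}`, the dimension of the space of spherical harmonics of degree `ℓ` on `S^d`. -/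
def harmDim (d ℓ : ℕ) : ℝ :=
  if ℓ = 0 then 1
  else (2 * (ℓ : ℝ) + d - 1) / ((ℓ : ℝ) + d - 1) * (Nat.choose (ℓ + d - 1) ℓ : ℝ)

/-- The volume `|S^d| = 2 π^{(d+1)/2} / Γ((d+1)/2)`. -/
def sphereVol (d : ℕ) : ℝ :=
  2 * Real.pi ^ (((d : ℝ) + 1) / 2) / Real.Gamma (((d : ℝ) + 1) / 2)

/-- The filtered kernel `K_n(t) = Σ_ℓ η(ℓ/n) (Z_{d,ℓ}/|S^d|) P_ℓ^{(d+1)}(t)`. -/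
def filteredKernel (d : ℕ) (η : ℝ → ℝ) (n : ℕ) (t : ℝ) : ℝ :=
  ∑' ℓ : ℕ, η ((ℓ : ℝ) / (n : ℝ)) * (harmDim d ℓ / sphereVol d) * normGegenbauer d ℓ t

/-- Mesh norm (covering radius) of a finite point configuration on the sphere. -/
def meshNorm {d : ℕ} {ι : Type*} [Fintype ι] (x : ι → UnitSphere d) : ℝ :=
  ⨆ y : UnitSphere d, ⨅ i : ι, geoDist y (x i)

/-- Separation radius of a finite point configuration on the sphere. -/
def sepRadius {d : ℕ} {ι : Type*} [Fintype ι] (x : ι → UnitSphere d) : ℝ :=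
  (1 / 2) * ⨅ p : {q : ι × ι // q.1 ≠ q.2}, geoDist (x p.val.1) (x p.val.2)

/-- Mesh ratio `ρ = h/δ ≥ 1`. -/
def meshRatio {d : ℕ} {ι : Type*} [Fintype ι] (x : ι → UnitSphere d) : ℝ :=
  meshNorm x / sepRadius x

/-- `g` is a spherical-harmonic decomposition of `f` witnessing membership of the
Sobolev space `W₂^r(S^d)`. -/
structure SobolevData (d : ℕ) (r : ℝ) (f : UnitSphere d → ℝ) (g : ℕ → UnitSphere d → ℝ) :
    Prop where
  harmonic : ∀ ℓ, g ℓ ∈ sphHarmonic d ℓ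
  hasSum : ∀ x, HasSum (fun ℓ => g ℓ x) (f x)
  summable : Summable (fun ℓ : ℕ =>
    (1 + (ℓ : ℝ) * ((ℓ : ℝ) + d - 1)) ^ r * ∫ x, (g ℓ x) ^ 2 ∂(sphereMeasure d))

/-- The squared Sobolev norm `‖f‖²_{W₂^r}` computed from a harmonic decomposition `g`. -/
def sobNormSq (d : ℕ) (r : ℝ) (g : ℕ → UnitSphere d → ℝ) : ℝ :=
  ∑' ℓ : ℕ, (1 + (ℓ : ℝ) * ((ℓ : ℝ) + d - 1)) ^ r * ∫ x, (g ℓ x) ^ 2 ∂(sphereMeasure d)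

end

/-! The error `f⋄*_{D,n} - f⋄_{D,n} = -∑ᵢ wᵢ εᵢ K_n(xᵢ · ·)` is linear in the noise. As the `εᵢ` are
independent and centred, the cross terms of its second moment vanish, so pointwise
`E (f⋄* - f⋄)² = ∑ᵢ wᵢ² E εᵢ² K_n(xᵢ · ·)² ≤ M² ∑ᵢ wᵢ² K_n(xᵢ · ·)²`; integrating over the sphere
and using `wᵢ ≤ c₂/|D|` and `‖K_n(xᵢ · ·)‖² ≤ c₁ nᵈ` on each of the `|D|` terms gives the bound.

These integrals are finite because `K_n` is a polynomial (`η` vanishes beyond `2`) and the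
surface measure is finite: the sphere is covered by the radial projections of the `2(d+1)` faces
of the cube `[-1,1]^{d+1}`, and radial projection is `2`-Lipschitz outside the unit ball. -/

theorem lipschitzOnWith_normalize {V : Type*} [NormedAddCommGroup V] [NormedSpace ℝ V] :
    LipschitzOnWith 2 (NormedSpace.normalize : V → V) {x | 1 ≤ ‖x‖} := by
  refine LipschitzOnWith.of_dist_le_mul fun x (hx : 1 ≤ ‖x‖) y (hy : 1 ≤ ‖y‖) => ?_
  have hx0 : 0 < ‖x‖ := one_pos.trans_le hx
  have hy0 : 0 < ‖y‖ := one_pos.trans_le hy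
  have hsplit : NormedSpace.normalize x - NormedSpace.normalize y =
      ‖x‖⁻¹ • (x - y) + (‖x‖⁻¹ - ‖y‖⁻¹) • y := by
    simp only [NormedSpace.normalize, smul_sub, sub_smul]; abel
  have h₁ : ‖‖x‖⁻¹ • (x - y)‖ ≤ ‖x - y‖ := by
    rw [norm_smul, norm_inv, norm_norm]
    exact mul_le_of_le_one_left (norm_nonneg _) (inv_le_one_of_one_le₀ hx)
  have h₂ : ‖(‖x‖⁻¹ - ‖y‖⁻¹) • y‖ ≤ ‖x - y‖ := by
    rw [norm_smul, inv_sub_inv hx0.ne' hy0.ne', norm_div, norm_mul, norm_norm, norm_norm,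
      div_mul_eq_mul_div, mul_div_mul_right _ _ hy0.ne', Real.norm_eq_abs, abs_sub_comm]
    exact (div_le_self (abs_nonneg _) hx).trans (abs_norm_sub_norm_le x y)
  rw [dist_eq_norm, dist_eq_norm, hsplit, NNReal.coe_ofNat]
  linarith [norm_add_le (‖x‖⁻¹ • (x - y)) ((‖x‖⁻¹ - ‖y‖⁻¹) • y)]

def faceEmbedding {d : ℕ} (j : Fin (d + 1)) (a : ℝ) (u : Fin d → ℝ) :
    EuclideanSpace ℝ (Fin (d + 1)) :=
  WithLp.toLp 2 (Fin.insertNth (α := fun _ ↦ ℝ) j a u)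

theorem lipschitzWith_faceEmbedding {d : ℕ} (j : Fin (d + 1)) (a : ℝ) :
    LipschitzWith ((d + 1 : ℕ) ^ (1 / 2 : ℝ)) (faceEmbedding j a) := by
  have hins : LipschitzWith 1 (Fin.insertNth (α := fun _ ↦ ℝ) j a) :=
    LipschitzWith.of_dist_le_mul fun u v => by simp
  unfold faceEmbedding
  simpa [Function.comp_def] using
    (PiLp.lipschitzWith_toLp 2 fun _ : Fin (d + 1) ↦ ℝ).comp hins

theorem abs_le_norm_faceEmbedding {d : ℕ} (j : Fin (d + 1)) (a : ℝ) (u : Fin d → ℝ) :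
    |a| ≤ ‖faceEmbedding j a u‖ := by
  simpa [faceEmbedding] using PiLp.norm_apply_le (faceEmbedding j a u) j

theorem sphere_subset_biUnion_normalize_image_faceEmbedding (d : ℕ) :
    Metric.sphere (0 : EuclideanSpace ℝ (Fin (d + 1))) 1 ⊆
      ⋃ p ∈ (Set.univ : Set (Fin (d + 1))) ×ˢ ({-1, 1} : Set ℝ),
        (NormedSpace.normalize ∘ faceEmbedding p.1 p.2) '' Set.Icc (-1) 1 := by
  intro x hx
  rw [mem_sphere_zero_iff_norm] at hx
  obtain ⟨j, hj⟩ := Finite.exists_max fun i ↦ |x i|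
  have hxj : 0 < |x j| := by
    by_contra! h
    have hx0 : x = 0 := by
      ext i
      exact abs_nonpos_iff.1 ((hj i).trans h)
    simp [hx0] at hx
  set y := |x j|⁻¹ • x with hy
  have hy_le : ∀ i, |y i| ≤ 1 := fun i ↦ by
    simpa [hy, abs_mul, inv_mul_le_one₀ hxj] using hj i
  have hyj : |y j| = 1 := by simp [hy, abs_mul, hxj.ne']
  refine Set.mem_biUnion (x := (j, y j)) ⟨trivial, ?_⟩ ⟨Fin.removeNth j y, ?_, ?_⟩
  · rcases (abs_eq zero_le_one).1 hyj with h | h <;> simp [h]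
  · exact ⟨fun k ↦ (abs_le.1 (hy_le _)).1, fun k ↦ (abs_le.1 (hy_le _)).2⟩
  · simp only [Function.comp_apply, faceEmbedding, Fin.insertNth_self_removeNth,
      WithLp.toLp_ofLp]
    rw [hy, NormedSpace.normalize_smul_of_pos (inv_pos.2 hxj),
      NormedSpace.normalize_eq_self_of_norm_eq_one hx]

theorem hausdorffMeasure_sphere_lt_top (d : ℕ) :
    μH[d] (Metric.sphere (0 : EuclideanSpace ℝ (Fin (d + 1))) 1) < ∞ := by
  refine (measure_mono (sphere_subset_biUnion_normalize_image_faceEmbedding d)).trans_lt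
    (measure_biUnion_lt_top (Set.finite_univ.prod (Set.toFinite _)) fun p hp ↦ ?_)
  have hp₂ : |p.2| = 1 := by
    obtain h | h : p.2 = -1 ∨ p.2 = 1 := hp.2 <;> simp [h]
  have hmaps : Set.MapsTo (faceEmbedding p.1 p.2) (Set.Icc (-1) 1) {x | 1 ≤ ‖x‖} :=
    fun u _ ↦ hp₂ ▸ abs_le_norm_faceEmbedding p.1 p.2 u
  have hlip := lipschitzOnWith_normalize.comp
    (lipschitzWith_faceEmbedding p.1 p.2).lipschitzOnWith hmaps
  have hcube : μH[d] (Set.Icc (-1 : Fin d → ℝ) 1) < ∞ := by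
    have hvol := hausdorffMeasure_pi_real (ι := Fin d)
    rw [Fintype.card_fin] at hvol
    rw [hvol]
    exact measure_Icc_lt_top
  exact (hlip.hausdorffMeasure_image_le (Nat.cast_nonneg d)).trans_lt
    (ENNReal.mul_lt_top (ENNReal.rpow_lt_top_of_nonneg (Nat.cast_nonneg d) ENNReal.coe_ne_top)
      hcube)

instance (d : ℕ) : IsFiniteMeasure (sphereMeasure d) := by
  constructor
  have himage := isometry_subtype_coe.hausdorffMeasure_image (d := d)
    (Or.inl (Nat.cast_nonneg d)) (Set.univ : Set (UnitSphere d))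
  rw [Set.image_univ, Subtype.range_coe] at himage
  rw [sphereMeasure, ← himage]
  exact hausdorffMeasure_sphere_lt_top d

theorem IsFilter.apply_div_eq_zero {η : ℝ → ℝ} {κ : ℕ} (hη : IsFilter η κ) {n ℓ : ℕ}
    (hℓ : 2 * n < ℓ) : η ((ℓ : ℝ) / n) = 0 := by
  refine hη.supp _ (by positivity) fun hmem ↦ ?_
  rcases Nat.eq_zero_or_pos n with rfl | hn
  · -- `ℓ / 0 = 0` in Lean, and `0 ∉ [1/2, 2]`
    norm_num at hmem
  · have : (2 : ℝ) * n < ℓ := by exact_mod_cast hℓ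
    exact hmem.2.not_gt ((lt_div_iff₀ (by exact_mod_cast hn)).2 this)

theorem filteredKernel_eq_sum {η : ℝ → ℝ} {κ : ℕ} (hη : IsFilter η κ) (d n : ℕ) (t : ℝ) :
    filteredKernel d η n t = ∑ ℓ ∈ Finset.range (2 * n + 1),
      η ((ℓ : ℝ) / n) * (harmDim d ℓ / sphereVol d) * normGegenbauer d ℓ t :=
  tsum_eq_sum fun ℓ hℓ ↦ by
    rw [hη.apply_div_eq_zero (by simpa [Nat.lt_succ_iff] using hℓ), zero_mul, zero_mul]

theorem continuous_filteredKernel {η : ℝ → ℝ} {κ : ℕ} (hη : IsFilter η κ) (d n : ℕ) :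
    Continuous (filteredKernel d η n) := by
  simp_rw [funext (filteredKernel_eq_sum hη d n), normGegenbauer]
  fun_prop

theorem integral_sq_sum_mul_eq {Ω ι : Type*} [MeasurableSpace Ω] {μ : Measure Ω}
    [Fintype ι] {ε : ι → Ω → ℝ} (hε : ∀ i, MemLp (ε i) 2 μ)
    (hindep : Pairwise fun i j ↦ IndepFun (ε i) (ε j) μ) (hmean : ∀ i, ∫ ω, ε i ω ∂μ = 0)
    (a : ι → ℝ) :
    ∫ ω, (∑ i, a i * ε i ω) ^ 2 ∂μ = ∑ i, a i ^ 2 * ∫ ω, ε i ω ^ 2 ∂μ := by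
  have hprod : ∀ i j, Integrable (fun ω ↦ ε i ω * ε j ω) μ := fun i j ↦
    (hε i).integrable_mul (hε j)
  have hcross : ∀ i j, i ≠ j → ∫ ω, ε i ω * ε j ω ∂μ = 0 := fun i j hij ↦ by
    rw [(hindep hij).integral_fun_mul_eq_mul_integral (hε i).1 (hε j).1, hmean i, zero_mul]
  have hexpand : ∀ ω, (∑ i, a i * ε i ω) ^ 2 = ∑ i, ∑ j, a i * a j * (ε i ω * ε j ω) :=
    fun ω ↦ by simp_rw [sq, Finset.sum_mul_sum, mul_mul_mul_comm]
  simp_rw [hexpand]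
  rw [integral_finsetSum _ fun i _ ↦ integrable_finsetSum _ fun j _ ↦ (hprod i j).const_mul _]
  refine Finset.sum_congr rfl fun i _ ↦ ?_
  rw [integral_finsetSum _ fun j _ ↦ (hprod i j).const_mul _,
    Finset.sum_eq_single i (fun j _ hji ↦ by rw [integral_const_mul, hcross i j hji.symm, mul_zero])
      (by simp), integral_const_mul]
  simp_rw [sq]

theorem integral_sq_sum_mul_le {Ω ι : Type*} [MeasurableSpace Ω] {μ : Measure Ω}
    [IsProbabilityMeasure μ] [Fintype ι] {ε : ι → Ω → ℝ} (hmeas : ∀ i, Measurable (ε i))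
    (hindep : Pairwise fun i j ↦ IndepFun (ε i) (ε j) μ) (hmean : ∀ i, ∫ ω, ε i ω ∂μ = 0)
    {M : ℝ} (hbdd : ∀ i ω, |ε i ω| ≤ M) (a : ι → ℝ) :
    ∫ ω, (∑ i, a i * ε i ω) ^ 2 ∂μ ≤ M ^ 2 * ∑ i, a i ^ 2 := by
  have hsq : ∀ i, ∫ ω, ε i ω ^ 2 ∂μ ≤ M ^ 2 := fun i ↦ by
    refine (le_abs_self _).trans ?_
    simpa using norm_integral_le_of_norm_le_const (μ := μ) (f := fun ω ↦ ε i ω ^ 2)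
      (ae_of_all _ fun ω ↦ by simpa [sq_abs] using pow_le_pow_left₀ (abs_nonneg _) (hbdd i ω) 2)
  rw [integral_sq_sum_mul_eq (fun i ↦ .of_bound (hmeas i).aestronglyMeasurable M
    (ae_of_all _ (hbdd i))) hindep hmean, Finset.mul_sum]
  exact Finset.sum_le_sum fun i _ ↦ by
    rw [mul_comm (M ^ 2)]
    exact mul_le_mul_of_nonneg_left (hsq i) (sq_nonneg _)

theorem integral_sum_sq_mul_sq_le {X ι : Type*} [MeasurableSpace X] {ν : Measure X} [Fintype ι]
    {g : ι → X → ℝ} (hg : ∀ i, Integrable (fun y ↦ g i y ^ 2) ν) {w : ι → ℝ} {B C : ℝ}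
    (hw : ∀ i, 0 ≤ w i ∧ w i ≤ B) (hC : ∀ i, ∫ y, g i y ^ 2 ∂ν ≤ C) :
    ∫ y, ∑ i, w i ^ 2 * g i y ^ 2 ∂ν ≤ Fintype.card ι * (B ^ 2 * C) := by
  rw [integral_finsetSum _ fun i _ ↦ (hg i).const_mul _, ← nsmul_eq_mul, ← Finset.card_univ,
    ← Finset.sum_const]
  gcongr with i
  rw [integral_const_mul]
  exact mul_le_mul (pow_le_pow_left₀ (hw i).1 (hw i).2 2) (hC i)
    (integral_nonneg fun y ↦ sq_nonneg _) (sq_nonneg _)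

theorem stmt_12_general (d : ℕ) (κ : ℕ) (η : ℝ → ℝ) (hη : IsFilter η κ)
    (n : ℕ)
    (c₁ : ℝ)
    (hc₁ : ∀ x : UnitSphere d,
      ∫ y, (filteredKernel d η n (sdot x y)) ^ 2 ∂(sphereMeasure d) ≤ c₁ * (n : ℝ) ^ (d : ℕ))
    (N : ℕ) (x : Fin N → UnitSphere d)
    (c₂ : ℝ) (w : Fin N → ℝ)
    (hw : ∀ i, 0 ≤ w i ∧ w i ≤ c₂ / (N : ℝ))
    (fstar : UnitSphere d → ℝ)
    (Ω : Type) (mΩ : MeasureSpace Ω) (hprob : IsProbabilityMeasure (ℙ : Measure Ω))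
    (ε : Fin N → Ω → ℝ) (hεmeas : ∀ i, Measurable (ε i))
    (hεindep : ProbabilityTheory.iIndepFun ε ℙ)
    (hεmean : ∀ i, ∫ ω, ε i ω ∂ℙ = 0)
    (M : ℝ) (hεbdd : ∀ i ω, |ε i ω| ≤ M)
    (F : Ω → UnitSphere d → ℝ) (Fstar : UnitSphere d → ℝ)
    (hF : ∀ ω y, F ω y = ∑ i, w i * (fstar (x i) + ε i ω) * filteredKernel d η n (sdot (x i) y))
    (hFstar : ∀ y, Fstar y = ∑ i, w i * fstar (x i) * filteredKernel d η n (sdot (x i) y)) :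
    ∫ y, (∫ ω, (Fstar y - F ω y) ^ 2 ∂ℙ) ∂(sphereMeasure d) ≤
      c₁ * c₂ ^ 2 * M ^ 2 * (n : ℝ) ^ (d : ℕ) / (N : ℝ) := by
  set K : Fin N → UnitSphere d → ℝ := fun i y ↦ filteredKernel d η n (sdot (x i) y)
  have hKsq : ∀ i, Integrable (fun y ↦ K i y ^ 2) (sphereMeasure d) := fun i ↦
    (((continuous_filteredKernel hη d n).comp
      (continuous_const.inner continuous_subtype_val)).pow 2).integrable_of_hasCompactSupport
      (.of_compactSpace _)
  have hvar : ∀ y, ∫ ω, (Fstar y - F ω y) ^ 2 ∂ℙ ≤ M ^ 2 * ∑ i, w i ^ 2 * K i y ^ 2 := fun y ↦ by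
    have hdiff : ∀ ω, Fstar y - F ω y = ∑ i, -(w i * K i y) * ε i ω := fun ω ↦ by
      rw [hFstar, hF, ← Finset.sum_sub_distrib]
      exact Finset.sum_congr rfl fun i _ ↦ by ring
    simp_rw [hdiff]
    simpa only [neg_sq, mul_pow] using integral_sq_sum_mul_le hεmeas
      (fun i j hij ↦ hεindep.indepFun hij) hεmean hεbdd fun i ↦ -(w i * K i y)
  calc ∫ y, (∫ ω, (Fstar y - F ω y) ^ 2 ∂ℙ) ∂(sphereMeasure d)
      ≤ ∫ y, M ^ 2 * ∑ i, w i ^ 2 * K i y ^ 2 ∂(sphereMeasure d) :=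
        integral_mono_of_nonneg (ae_of_all _ fun y ↦ integral_nonneg fun ω ↦ sq_nonneg _)
          ((integrable_finsetSum _ fun i _ ↦ (hKsq i).const_mul _).const_mul _) (ae_of_all _ hvar)
    _ ≤ M ^ 2 * (N * ((c₂ / N) ^ 2 * (c₁ * (n : ℝ) ^ d))) := by
        rw [integral_const_mul]
        gcongr
        simpa using integral_sum_sq_mul_sq_le hKsq hw fun i ↦ hc₁ (x i)
    _ = c₁ * c₂ ^ 2 * M ^ 2 * (n : ℝ) ^ d / N := by
        rcases Nat.eq_zero_or_pos N with rfl | hN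
        · simp
        · field_simp

/-- Variance bound for the filtered hyperinterpolation with deterministic sampling:
if `0 ≤ w_{i,s,D} ≤ c₂ |D|⁻¹` and `‖K_n(x·)‖²_{L2(S^d)} ≤ c₁ n^d`, then
`∫ E{(f⋄*_{D,n}(x) - f⋄_{D,n}(x))²} dω(x) ≤ c₁ c₂² M² n^d / |D|`. -/
theorem stmt_12 (d : ℕ) (hd : 2 ≤ d) (κ : ℕ) (η : ℝ → ℝ) (hη : IsFilter η κ)
    (n : ℕ) (hn : 1 ≤ n)
    (c₁ : ℝ) (hc₁pos : 0 < c₁)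
    (hc₁ : ∀ x : UnitSphere d,
      ∫ y, (filteredKernel d η n (sdot x y)) ^ 2 ∂(sphereMeasure d) ≤ c₁ * (n : ℝ) ^ (d : ℕ))
    (N : ℕ) (hN : 1 ≤ N) (x : Fin N → UnitSphere d)
    (c₂ : ℝ) (hc₂pos : 0 < c₂) (w : Fin N → ℝ)
    (hw : ∀ i, 0 ≤ w i ∧ w i ≤ c₂ / (N : ℝ))
    (fstar : UnitSphere d → ℝ) (hfstar : Continuous fstar)
    (Ω : Type) (mΩ : MeasureSpace Ω) (hprob : IsProbabilityMeasure (ℙ : Measure Ω))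
    (ε : Fin N → Ω → ℝ) (hεmeas : ∀ i, Measurable (ε i))
    (hεindep : ProbabilityTheory.iIndepFun ε ℙ)
    (hεmean : ∀ i, ∫ ω, ε i ω ∂ℙ = 0)
    (M : ℝ) (hεbdd : ∀ i ω, |ε i ω| ≤ M)
    (F : Ω → UnitSphere d → ℝ) (Fstar : UnitSphere d → ℝ)
    (hF : ∀ ω y, F ω y = ∑ i, w i * (fstar (x i) + ε i ω) * filteredKernel d η n (sdot (x i) y))
    (hFstar : ∀ y, Fstar y = ∑ i, w i * fstar (x i) * filteredKernel d η n (sdot (x i) y)) :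
    ∫ y, (∫ ω, (Fstar y - F ω y) ^ 2 ∂ℙ) ∂(sphereMeasure d) ≤
      c₁ * c₂ ^ 2 * M ^ 2 * (n : ℝ) ^ (d : ℕ) / (N : ℝ) :=
  stmt_12_general d κ η hη n c₁ hc₁ N x c₂ w hw fstar Ω mΩ hprob ε hεmeas hεindep hεmean M hεbdd F
    Fstar hF hFstar
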